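/- Let (M, ≤, ⊙, t, →, ⇝) be a pointed residuated po-monoid. Then the following are equivalent: (i) for every a in M, t ≤ (a ⇝ t) → (a → t); (ii) for all x, y in M, if x ⊙ y ≤ t then y ⊙ x ≤ t. (The weak commutativity axiom (WCM) holds in a residuated po-monoid exactly when the monoid operation is weakly commutative at the unit, which is the semantic counterpart of the structural rule (WCM): from Γ, Δ ⇒ t infer Δ, Γ ⇒ t.) -/

import Mathlib

/-! Since `t` is a right unit, `t ≤ u → v` is just `u ≤ v`, so (i) at `a` says `a ⇝ t ≤ a → t`.
By residuation `a ⇝ t` is the largest `x` with `x ⊙ a ≤ t` and `a → t` the largest `x` with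
`a ⊙ x ≤ t`, so this inequality says exactly that `x ⊙ a ≤ t` implies `a ⊙ x ≤ t` for all `x`. -/

section ResiduatedPoMonoid

variable {M : Type*} [PartialOrder M] (odot : M → M → M) (t : M) (imp limp : M → M → M)

theorem unit_le_imp_iff (hone' : ∀ x, odot x t = x) (hres : ∀ x y z, odot x y ≤ z ↔ y ≤ imp x z)
    (u v : M) : t ≤ imp u v ↔ u ≤ v := by
  rw [← hres, hone']

theorem unit_le_imp_limp_imp_iff (hone' : ∀ x, odot x t = x)
    (hres : ∀ x y z, odot x y ≤ z ↔ y ≤ imp x z) (hres' : ∀ x y z, odot x y ≤ z ↔ x ≤ limp y z)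
    (a : M) : t ≤ imp (limp a t) (imp a t) ↔ ∀ x, odot x a ≤ t → odot a x ≤ t := by
  rw [unit_le_imp_iff odot t imp hone' hres, ← forall_le_iff_le]
  simp only [← hres, ← hres']

end ResiduatedPoMonoid

theorem wcm_iff_weakly_commutative_general {M : Type*} [PartialOrder M]
    (odot : M → M → M) (t : M) (imp limp : M → M → M)
    (hone' : ∀ x, odot x t = x)
    (hres : ∀ x y z, odot x y ≤ z ↔ y ≤ imp x z)
    (hres' : ∀ x y z, odot x y ≤ z ↔ x ≤ limp y z) :
    (∀ a, t ≤ imp (limp a t) (imp a t)) ↔ (∀ x y, odot x y ≤ t → odot y x ≤ t) := by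
  simp only [unit_le_imp_limp_imp_iff odot t imp limp hone' hres hres']
  exact forall_comm

theorem wcm_iff_weakly_commutative {M : Type*} [PartialOrder M]
    (odot : M → M → M) (t : M) (imp limp : M → M → M)
    (hassoc : ∀ x y z, odot (odot x y) z = odot x (odot y z))
    (hone : ∀ x, odot t x = x) (hone' : ∀ x, odot x t = x)
    (hres : ∀ x y z, odot x y ≤ z ↔ y ≤ imp x z)
    (hres' : ∀ x y z, odot x y ≤ z ↔ x ≤ limp y z) :
    (∀ a, t ≤ imp (limp a t) (imp a t)) ↔ (∀ x y, odot x y ≤ t → odot y x ≤ t) :=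
  wcm_iff_weakly_commutative_general odot t imp limp hone' hres hres'
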